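/- arXiv:1304.5450 — 5 statements merged into one kernel-verified Lean document; each statement's English description precedes it below -/
import Mathlib

section
/- For every finite group H, the cardinality of Aut(H) divides φ₂(H), and the number of normal subgroups N of the free group F₂ of rank 2 such that F₂/N is isomorphic to H equals φ₂(H)/|Aut H|. -/
open scoped MatrixGroups

/-- `Σ(T)`: the union of all conjugates of the cyclic subgroups generated by the
three entries of the triple `T = (a, b, c)`. -/
def SigmaSet {G : Type*} [Group G] (T : G × G × G) : Set G :=
  {x | ∃ g : G, g * x * g⁻¹ ∈
    (Subgroup.zpowers T.1 : Set G) ∪ (Subgroup.zpowers T.2.1 : Set G) ∪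
      (Subgroup.zpowers T.2.2 : Set G)}

/-- `T = (a,b,c)` is a generating triple: `a*b*c = 1` and `{a,b,c}` generates. -/
def IsGenTriple {G : Type*} [Group G] (T : G × G × G) : Prop :=
  T.1 * T.2.1 * T.2.2 = 1 ∧ Subgroup.closure {T.1, T.2.1, T.2.2} = ⊤

/-- `T` is hyperbolic: the reciprocals of the orders of its entries sum to less than 1. -/
def IsHyperbolic {G : Type*} [Group G] (T : G × G × G) : Prop :=
  (orderOf T.1 : ℚ)⁻¹ + (orderOf T.2.1 : ℚ)⁻¹ + (orderOf T.2.2 : ℚ)⁻¹ < 1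

/-- An unmixed Beauville structure on `G`: a pair of hyperbolic generating triples
`T₁, T₂` with `Σ(T₁) ∩ Σ(T₂) = {1}`. -/
def HasBeauvilleStructure (G : Type*) [Group G] : Prop :=
  ∃ T₁ T₂ : G × G × G, IsGenTriple T₁ ∧ IsHyperbolic T₁ ∧ IsGenTriple T₂ ∧ IsHyperbolic T₂ ∧
    SigmaSet T₁ ∩ SigmaSet T₂ = {1}

/-- `φ₂(H)`: the number of ordered generating pairs of `H`. -/
noncomputable def phi2 (H : Type*) [Group H] : ℕ :=
  Nat.card {p : H × H // Subgroup.closure {p.1, p.2} = ⊤}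

/-- Two triples are equivalent if some automorphism carries one to the other entrywise. -/
def TripleEquiv {H : Type*} [Group H] (T T' : H × H × H) : Prop :=
  ∃ α : MulAut H, α T.1 = T'.1 ∧ α T.2.1 = T'.2.1 ∧ α T.2.2 = T'.2.2

namespace NSFG

variable {H : Type*} [Group H]

/-- Generating pairs of `H`. -/
def S (H : Type*) [Group H] := {p : H × H // Subgroup.closure {p.1, p.2} = ⊤}

lemma closure_map_pair (α : MulAut H) {x y : H} (h : Subgroup.closure {x, y} = ⊤) :
    Subgroup.closure {α x, α y} = ⊤ := by
  have h1 : ({α x, α y} : Set H) = α.toMonoidHom '' {x, y} := by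
    simp [Set.image_insert_eq]
  rw [h1, ← MonoidHom.map_closure, h]
  exact Subgroup.map_top_of_surjective _ α.surjective

instance : MulAction (MulAut H) (S H) where
  smul α p := ⟨(α p.1.1, α p.1.2), closure_map_pair α p.2⟩
  one_smul p := rfl
  mul_smul α β p := rfl

lemma smul_def (α : MulAut H) (p : S H) : (α • p).1 = (α p.1.1, α p.1.2) := rfl

instance [Finite H] : Finite (MulAut H) := by
  classical
  exact Finite.of_injective (fun e : MulAut H => (e : H → H))
    fun a b h => by ext x; exact congrFun h x

lemma stab_eq_bot [Finite H] (p : S H) : MulAction.stabilizer (MulAut H) p = ⊥ := by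
  ext α
  simp only [MulAction.mem_stabilizer_iff, Subgroup.mem_bot]
  constructor
  · intro hfix
    have h1 : α p.1.1 = p.1.1 := congrArg (fun q : S H => q.1.1) hfix
    have h2 : α p.1.2 = p.1.2 := congrArg (fun q : S H => q.1.2) hfix
    have : α.toMonoidHom = MonoidHom.id H := by
      refine MonoidHom.eq_of_eqOn_dense p.2 ?_
      intro z hz
      rcases hz with rfl | rfl
      · exact h1
      · exact h2
    ext x
    exact congrArg (fun f : H →* H => f x) this
  · rintro rfl; rfl


/-- The hom `F₂ → H` determined by a pair. -/
def toHom (p : H × H) : FreeGroup (Fin 2) →* H := FreeGroup.lift ![p.1, p.2]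

@[simp] lemma toHom_of0 (p : H × H) : toHom p (FreeGroup.of 0) = p.1 := by
  simp [toHom]

@[simp] lemma toHom_of1 (p : H × H) : toHom p (FreeGroup.of 1) = p.2 := by
  simp [toHom]

lemma range_pair (p : H × H) : Set.range ![p.1, p.2] = {p.1, p.2} := by
  ext z
  rw [Set.mem_range]
  constructor
  · rintro ⟨i, rfl⟩; fin_cases i <;> simp
  · rintro (rfl | rfl)
    exacts [⟨0, rfl⟩, ⟨1, rfl⟩]

lemma toHom_surjective (p : S H) : Function.Surjective (toHom p.1) := by
  rw [← MonoidHom.range_eq_top, toHom, FreeGroup.range_lift_eq_closure, range_pair, p.2]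

lemma toHom_comp (α : MulAut H) (p : S H) :
    toHom (α • p).1 = α.toMonoidHom.comp (toHom p.1) := by
  apply FreeGroup.ext_hom
  intro a
  fin_cases a <;> simp [smul_def]

lemma ker_toHom_smul (α : MulAut H) (p : S H) :
    (toHom (α • p).1).ker = (toHom p.1).ker := by
  rw [toHom_comp]
  ext x
  simp [MonoidHom.mem_ker]

/-- Target type: normal subgroups with quotient iso to `H`. -/
def T (H : Type*) [Group H] := {N : Subgroup (FreeGroup (Fin 2)) //
    ∃ hN : N.Normal, letI := hN; Nonempty ((FreeGroup (Fin 2) ⧸ N) ≃* H)}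

noncomputable def F (p : S H) : T H :=
  ⟨(toHom p.1).ker, MonoidHom.normal_ker _,
    ⟨QuotientGroup.quotientKerEquivOfSurjective _ (toHom_surjective p)⟩⟩

lemma F_fst (p : S H) : (F p).1 = (toHom p.1).ker := rfl


lemma quotEquiv_mk (p : S H) (x : FreeGroup (Fin 2)) :
    QuotientGroup.quotientKerEquivOfSurjective _ (toHom_surjective p)
      (QuotientGroup.mk x) = toHom p.1 x :=
  rfl

lemma exists_smul_of_ker_eq (p q : S H) (h : (toHom p.1).ker = (toHom q.1).ker) :
    ∃ α : MulAut H, α • p = q := by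
  let e := QuotientGroup.quotientKerEquivOfSurjective _ (toHom_surjective p)
  let e' := QuotientGroup.quotientKerEquivOfSurjective _ (toHom_surjective q)
  let c : FreeGroup (Fin 2) ⧸ (toHom p.1).ker ≃* FreeGroup (Fin 2) ⧸ (toHom q.1).ker :=
    QuotientGroup.quotientMulEquivOfEq h
  refine ⟨(e.symm.trans c).trans e', ?_⟩
  have key : ∀ x : FreeGroup (Fin 2),
      ((e.symm.trans c).trans e') (toHom p.1 x) = toHom q.1 x := by
    intro x
    have h1 : e.symm (toHom p.1 x) = QuotientGroup.mk x := by
      rw [← quotEquiv_mk p x]; exact e.symm_apply_apply _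
    simp only [MulEquiv.trans_apply, h1]
    rw [show c (QuotientGroup.mk x) = QuotientGroup.mk x from
      QuotientGroup.quotientMulEquivOfEq_mk h x]
    exact quotEquiv_mk q x
  apply Subtype.ext
  have k0 := key (FreeGroup.of 0)
  have k1 := key (FreeGroup.of 1)
  rw [toHom_of0, toHom_of0] at k0
  rw [toHom_of1, toHom_of1] at k1
  exact Prod.ext k0 k1

lemma F_surjective : Function.Surjective (F (H := H)) := by
  rintro ⟨N, hN, hiso⟩
  letI := hN
  obtain ⟨φ⟩ := hiso
  set f : FreeGroup (Fin 2) →* H := φ.toMonoidHom.comp (QuotientGroup.mk' N) with hf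
  have hfsurj : Function.Surjective f :=
    φ.surjective.comp (QuotientGroup.mk'_surjective N)
  have hgen : Subgroup.closure {f (FreeGroup.of 0), f (FreeGroup.of 1)} = ⊤ := by
    have h1 : ({f (FreeGroup.of 0), f (FreeGroup.of 1)} : Set H)
        = f '' {FreeGroup.of 0, FreeGroup.of 1} := by
      simp [Set.image_insert_eq]
    have h2 : Subgroup.closure {FreeGroup.of 0, FreeGroup.of 1}
        = (⊤ : Subgroup (FreeGroup (Fin 2))) := by
      have := FreeGroup.closure_range_of (Fin 2)
      rwa [show Set.range (FreeGroup.of : Fin 2 → FreeGroup (Fin 2))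
        = {FreeGroup.of 0, FreeGroup.of 1} from ?_] at this
      ext z
      rw [Set.mem_range]
      constructor
      · rintro ⟨i, rfl⟩; fin_cases i <;> simp
      · rintro (rfl | rfl)
        exacts [⟨0, rfl⟩, ⟨1, rfl⟩]
    rw [h1, ← MonoidHom.map_closure, h2]
    exact Subgroup.map_top_of_surjective _ hfsurj
  refine ⟨⟨(f (FreeGroup.of 0), f (FreeGroup.of 1)), hgen⟩, ?_⟩
  have htoHom : toHom (f (FreeGroup.of 0), f (FreeGroup.of 1)) = f := by
    apply FreeGroup.ext_hom
    intro a
    fin_cases a <;> simp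
  have hker : (toHom (f (FreeGroup.of 0), f (FreeGroup.of 1))).ker = N := by
    rw [htoHom]
    ext x
    simp only [hf, MonoidHom.mem_ker, MonoidHom.comp_apply, MulEquiv.coe_toMonoidHom]
    rw [show (φ (QuotientGroup.mk' N x) = 1) ↔ QuotientGroup.mk' N x = 1 from
      ⟨fun h => by simpa using φ.injective (h.trans (map_one φ).symm), fun h => by rw [h, map_one]⟩]
    rw [← MonoidHom.mem_ker, QuotientGroup.ker_mk']
  exact Subtype.ext hker


lemma F_resp (a b : S H) (h : MulAction.orbitRel (MulAut H) (S H) a b) : F a = F b := by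
  obtain ⟨α, rfl⟩ := h
  exact Subtype.ext (ker_toHom_smul α b)

noncomputable def Fbar : MulAction.orbitRel.Quotient (MulAut H) (S H) → T H :=
  fun ω => Quotient.liftOn' ω F F_resp

noncomputable def equivT : MulAction.orbitRel.Quotient (MulAut H) (S H) ≃ T H := by
  refine Equiv.ofBijective Fbar ⟨?_, ?_⟩
  · intro a b
    refine Quotient.inductionOn₂' a b ?_
    intro p q h
    have hker : (toHom p.1).ker = (toHom q.1).ker := congrArg Subtype.val h
    obtain ⟨α, hα⟩ := exists_smul_of_ker_eq p q hker
    exact Quotient.sound' (Setoid.symm' _ ⟨α, hα⟩)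
  · intro t
    obtain ⟨p, hp⟩ := F_surjective t
    exact ⟨Quotient.mk'' p, hp⟩

noncomputable def orbitPart [Finite H] (ω : MulAction.orbitRel.Quotient (MulAut H) (S H)) :
    MulAction.orbit (MulAut H) ω.out ≃ MulAut H :=
  (MulAction.orbitEquivQuotientStabilizer (MulAut H) ω.out).trans <|
    (Subgroup.quotientEquivOfEq (stab_eq_bot ω.out)).trans
      (QuotientGroup.quotientBot (G := MulAut H)).toEquiv

noncomputable def countEquiv [Finite H] :
    S H ≃ (MulAction.orbitRel.Quotient (MulAut H) (S H)) × MulAut H :=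
  (MulAction.selfEquivSigmaOrbits (MulAut H) (S H)).trans
    ((Equiv.sigmaCongrRight fun ω => orbitPart ω).trans (Equiv.sigmaEquivProd _ _))

lemma card_S [Finite H] :
    Nat.card (S H) =
      Nat.card (MulAction.orbitRel.Quotient (MulAut H) (S H)) * Nat.card (MulAut H) := by
  rw [Nat.card_congr (countEquiv (H := H)), Nat.card_prod]

end NSFG

/-- `|Aut H|` divides `φ₂(H)`, and the number of normal subgroups `N` of the free group `F₂`
of rank 2 with `F₂/N ≅ H` equals `φ₂(H)/|Aut H|`. -/
theorem card_normal_subgroups_free_group_eq (H : Type*) [Group H] [Finite H] :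
    Nat.card (MulAut H) ∣ phi2 H ∧
    Nat.card {N : Subgroup (FreeGroup (Fin 2)) //
        ∃ hN : N.Normal, letI := hN; Nonempty ((FreeGroup (Fin 2) ⧸ N) ≃* H)} =
      phi2 H / Nat.card (MulAut H) := by
  have hphi : phi2 H = Nat.card (NSFG.S H) := rfl
  have hcard := NSFG.card_S (H := H)
  have hT : Nat.card {N : Subgroup (FreeGroup (Fin 2)) //
        ∃ hN : N.Normal, letI := hN; Nonempty ((FreeGroup (Fin 2) ⧸ N) ≃* H)} =
      Nat.card (MulAction.orbitRel.Quotient (MulAut H) (NSFG.S H)) :=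
    Nat.card_congr (NSFG.equivT (H := H)).symm
  constructor
  · rw [hphi, hcard]
    exact dvd_mul_left _ _
  · rw [hphi, hcard, hT, Nat.mul_div_cancel _ Nat.card_pos]
end

section
/- Let H be a non-abelian finite simple group and k ≥ 1. If the direct power Hᵏ admits an unmixed Beauville structure, then k·|Aut H| ≤ φ₂(H). -/
open scoped MatrixGroups

private lemma map_closure_top' {G K : Type*} [Group G] [Group K] (φ : G →* K)
    (hφ : Function.Surjective φ) (x y : G) (h : Subgroup.closure {x, y} = ⊤) :
    Subgroup.closure {φ x, φ y} = ⊤ := by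
  have : (Subgroup.closure {x, y}).map φ = Subgroup.closure (φ '' {x, y}) :=
    MonoidHom.map_closure φ _
  rw [h, Set.image_insert_eq, Set.image_singleton] at this
  rw [← this]
  exact Subgroup.map_top_of_surjective φ hφ

private lemma pair_card_le {H : Type*} [Group H] [Finite H] [IsSimpleGroup H]
    (k : ℕ) (a b : Fin k → H) (hab : Subgroup.closure {a, b} = ⊤) :
    k * Nat.card (MulAut H) ≤
      Nat.card {p : H × H // Subgroup.closure {p.1, p.2} = ⊤} := by
  have heval : ∀ i : Fin k, Subgroup.closure {a i, b i} = ⊤ := fun i =>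
    map_closure_top' (Pi.evalMonoidHom (fun _ => H) i)
      (Function.surjective_eval i) a b hab
  set f : Fin k × MulAut H → {p : H × H // Subgroup.closure {p.1, p.2} = ⊤} :=
    fun q => ⟨(q.2 (a q.1), q.2 (b q.1)),
      map_closure_top' q.2.toMonoidHom q.2.surjective _ _ (heval q.1)⟩ with hf
  have hfinj : Function.Injective f := by
    rintro ⟨i, α⟩ ⟨j, β⟩ h
    have h1 : α (a i) = β (a j) := congrArg (fun p => p.1.1) h
    have h2 : α (b i) = β (b j) := congrArg (fun p => p.1.2) h
    have hγa : (β⁻¹ * α) (a i) = a j := by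
      simp [MulAut.mul_apply, h1]
    have hγb : (β⁻¹ * α) (b i) = b j := by
      simp [MulAut.mul_apply, h2]
    set γ : MulAut H := β⁻¹ * α with hγ
    by_cases hij : i = j
    · subst hij
      have hK : Subgroup.closure {a i, b i} ≤
          MonoidHom.eqLocus γ.toMonoidHom (MonoidHom.id H) := by
        apply Subgroup.closure_le _ |>.2
        rintro x (rfl | rfl)
        · exact hγa
        · exact hγb
      rw [heval i, top_le_iff] at hK
      have hγ1 : γ = 1 := by
        ext x
        have : x ∈ MonoidHom.eqLocus γ.toMonoidHom (MonoidHom.id H) := by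
          rw [hK]; trivial
        exact this
      have hαβ : β = α := by
        rw [hγ] at hγ1
        exact inv_mul_eq_one.mp hγ1
      exact Prod.ext rfl hαβ.symm
    · exfalso
      have hK : Subgroup.closure {a, b} ≤
          MonoidHom.eqLocus
            (γ.toMonoidHom.comp (Pi.evalMonoidHom (fun _ => H) i))
            (Pi.evalMonoidHom (fun _ => H) j) := by
        apply Subgroup.closure_le _ |>.2
        rintro x (rfl | rfl)
        · exact hγa
        · exact hγb
      rw [hab, top_le_iff] at hK
      obtain ⟨h0, hh0⟩ := exists_ne (1 : H)
      have hx : (Function.update (1 : Fin k → H) j h0) ∈ (⊤ : Subgroup (Fin k → H)) :=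
        trivial
      rw [← hK] at hx
      have : γ ((Function.update (1 : Fin k → H) j h0) i) =
          (Function.update (1 : Fin k → H) j h0) j := hx
      rw [Function.update_of_ne hij, Function.update_self] at this
      simp at this
      exact hh0 this.symm
  have hcard := Nat.card_le_card_of_injective f hfinj
  rwa [Nat.card_prod, Nat.card_eq_fintype_card, Fintype.card_fin] at hcard

/-- If `H` is a non-abelian finite simple group and `Hᵏ` admits an unmixed Beauville
structure, then `k·|Aut H| ≤ φ₂(H)`. -/
theorem beauville_imp_le_phi2 (H : Type*) [Group H] [Finite H] [IsSimpleGroup H]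
    (hna : ¬ ∀ a b : H, a * b = b * a) (k : ℕ) (hk : 1 ≤ k)
    (hB : HasBeauvilleStructure (Fin k → H)) :
    k * Nat.card (MulAut H) ≤ phi2 H := by
  obtain ⟨T₁, _, ⟨habc, hgen⟩, -⟩ := hB
  obtain ⟨a, b, c⟩ := T₁
  simp only [IsGenTriple] at habc hgen
  have hab : Subgroup.closure {a, b} = ⊤ := by
    rw [eq_top_iff, ← hgen]
    apply Subgroup.closure_le _ |>.2
    rintro x (rfl | rfl | rfl)
    · exact Subgroup.subset_closure (Set.mem_insert _ _)
    · exact Subgroup.subset_closure (Set.mem_insert_of_mem _ rfl)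
    · have hc : x = (a * b)⁻¹ := eq_inv_of_mul_eq_one_right habc
      rw [hc, mul_inv_rev]
      exact mul_mem
        (inv_mem (Subgroup.subset_closure (Set.mem_insert_of_mem _ rfl)))
        (inv_mem (Subgroup.subset_closure (Set.mem_insert _ _)))
  exact pair_card_le k a b hab
end

section
/- Let H be a non-abelian finite simple group and k ≥ 1. Then the direct power Hᵏ can be generated by two elements if and only if k·|Aut H| ≤ φ₂(H). -/
open scoped MatrixGroups

section WiegoldAux

variable {H : Type*} [Group H]




variable {H : Type*} [Group H]

lemma center_eq_bot_of_simple [IsSimpleGroup H] (hna : ¬ ∀ a b : H, a * b = b * a) :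
    Subgroup.center H = ⊥ := by
  rcases (inferInstance : (Subgroup.center H).Normal).eq_bot_or_eq_top with h | h
  · exact h
  · exact absurd (fun a b => by
      have : a ∈ Subgroup.center H := h ▸ Subgroup.mem_top a
      exact (Subgroup.mem_center_iff.mp this b).symm) hna

/-- A surjective hom from a power of a simple centerless group factors through a coordinate. -/
lemma hom_factor [IsSimpleGroup H] (hc : Subgroup.center H = ⊥) {k : ℕ}
    (f : (Fin k → H) →* H) (hf : Function.Surjective f) :
    ∃ (i : Fin k) (φ : H ≃* H), ∀ y, f y = φ (y i) := by
  set fc : Fin k → (H →* H) := fun i => f.comp (MonoidHom.mulSingle (fun _ => H) i) with hfc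
  have hcomm : ∀ {i j : Fin k}, i ≠ j → ∀ a b : H, Commute (fc i a) (fc j b) := by
    intro i j hij a b
    exact (Pi.mulSingle_commute hij a b).map f
  have hsplit : ∀ (y : Fin k → H) (j : Fin k),
      f y = fc j (y j) * f (Function.update y j 1) := by
    intro y j
    have hy : y = Pi.mulSingle j (y j) * Function.update y j 1 := by
      ext m
      by_cases hm : m = j
      · subst hm; simp
      · simp [Pi.mulSingle_eq_of_ne hm, Function.update_apply, hm]
    conv_lhs => rw [hy, map_mul]
    rfl
  have hupd : ∀ (s : Finset (Fin k)) (y : Fin k → H) (j : Fin k),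
      (∀ m, m ∉ insert j s → y m = 1) → ∀ m, m ∉ s → Function.update y j 1 m = 1 := by
    intro s y j hy m hm
    by_cases hmj : m = j
    · subst hmj; simp
    · rw [Function.update_apply, if_neg hmj]
      exact hy m (by simp [hmj, hm])
  have hzero : ∀ (s : Finset (Fin k)) (y : Fin k → H), (∀ m, m ∉ s → y m = 1) →
      (∀ j, ∀ b : H, fc j b = 1) → f y = 1 := by
    intro s
    induction s using Finset.induction_on with
    | empty =>
      intro y hy _
      have : y = 1 := funext fun m => hy m (Finset.notMem_empty m)
      rw [this, map_one]
    | @insert j s hjs ih =>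
      intro y hy htriv
      rw [hsplit y j, htriv j (y j), one_mul]
      exact ih _ (hupd s y j hy) htriv
  have hsupp : ∀ (s : Finset (Fin k)) (y : Fin k → H), (∀ m, m ∉ s → y m = 1) →
      ∀ i : Fin k, (∀ j, j ≠ i → ∀ b : H, fc j b = 1) → f y = fc i (y i) := by
    intro s
    induction s using Finset.induction_on with
    | empty =>
      intro y hy i _
      have : y = 1 := funext fun m => hy m (Finset.notMem_empty m)
      rw [this, map_one]
      simp
    | @insert j s hjs ih =>
      intro y hy i hother
      rw [hsplit y j, ih _ (hupd s y j hy) i hother]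
      by_cases hji : j = i
      · subst hji
        simp
      · rw [hother j hji (y j), one_mul, Function.update_apply, if_neg (Ne.symm hji)]
  -- some coordinate map is nontrivial
  have hex : ∃ (i : Fin k) (a : H), fc i a ≠ 1 := by
    by_contra hcon
    push_neg at hcon
    obtain ⟨c, hc1⟩ := exists_ne (1 : H)
    obtain ⟨y, hy⟩ := hf c
    exact hc1 (hy ▸ hzero Finset.univ y (fun m hm => absurd (Finset.mem_univ m) hm)
      (fun j b => hcon j b))
  obtain ⟨i, a, ha⟩ := hex
  -- conjugation by f y on range of fc i
  have hconj : ∀ (y : Fin k → H) (b : H),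
      f y * fc i b * (f y)⁻¹ = fc i (y i * b * (y i)⁻¹) := by
    intro y b
    have hcom : Commute (Function.update y i 1) (Pi.mulSingle i b) := by
      unfold Commute SemiconjBy
      ext m
      by_cases hm : m = i
      · subst hm; simp
      · simp [Pi.mulSingle_eq_of_ne hm, Function.update_apply, hm]
    have hcom' : Commute (f (Function.update y i 1)) (fc i b) := hcom.map f
    rw [hsplit y i]
    calc fc i (y i) * f (Function.update y i 1) * fc i b *
          (fc i (y i) * f (Function.update y i 1))⁻¹
        = fc i (y i) * (f (Function.update y i 1) * fc i b *
            (f (Function.update y i 1))⁻¹) * (fc i (y i))⁻¹ := by group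
      _ = fc i (y i) * fc i b * (fc i (y i))⁻¹ := by rw [hcom'.eq]; group
      _ = fc i (y i * b * (y i)⁻¹) := by rw [map_mul, map_mul, map_inv]
  have hAnormal : ((fc i).range).Normal := by
    constructor
    intro n hn g
    obtain ⟨b, hb⟩ := hn
    obtain ⟨y, hy⟩ := hf g
    exact ⟨y i * b * (y i)⁻¹, by rw [← hconj y b, hb, hy]⟩
  have hA : (fc i).range = ⊤ := by
    rcases hAnormal.eq_bot_or_eq_top with h | h
    · exact absurd ((Subgroup.mem_bot).mp (h ▸ ⟨a, rfl⟩ : fc i a ∈ (⊥ : Subgroup H))) ha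
    · exact h
  have hother : ∀ j, j ≠ i → ∀ b : H, fc j b = 1 := by
    intro j hj b
    have : fc j b ∈ Subgroup.center H := by
      rw [Subgroup.mem_center_iff]
      intro g
      have hg : g ∈ (fc i).range := hA ▸ Subgroup.mem_top g
      obtain ⟨c, hcg⟩ := hg
      rw [← hcg]
      exact ((hcomm hj b c).symm).eq
    rw [hc, Subgroup.mem_bot] at this
    exact this
  have hcollapse : ∀ y, f y = fc i (y i) :=
    fun y => hsupp Finset.univ y (fun m hm => absurd (Finset.mem_univ m) hm) i hother
  have hinj : Function.Injective (fc i) := by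
    rw [← MonoidHom.ker_eq_bot_iff]
    rcases (MonoidHom.normal_ker (fc i)).eq_bot_or_eq_top with h | h
    · exact h
    · exact absurd (MonoidHom.mem_ker.mp (h ▸ Subgroup.mem_top a : a ∈ (fc i).ker)) ha
  have hsurj : Function.Surjective (fc i) := by
    intro h
    obtain ⟨y, hy⟩ := hf h
    exact ⟨y i, by rw [← hcollapse y, hy]⟩
  exact ⟨i, MulEquiv.ofBijective (fc i) ⟨hinj, hsurj⟩, fun y => hcollapse y⟩






/-- Goursat-lite: a subdirect subgroup of `H × H` with `H` simple is full or a graph. -/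
lemma pair_subgroup_cases [IsSimpleGroup H] (T : Subgroup (H × H))
    (h1 : ∀ a : H, ∃ t ∈ T, t.1 = a) (h2 : ∀ b : H, ∃ t ∈ T, t.2 = b) :
    (∀ p : H × H, p ∈ T) ∨ ∃ φ : H ≃* H, ∀ t ∈ T, φ t.1 = t.2 := by
  set A : Subgroup H := T.comap (MonoidHom.inl H H) with hA
  set B : Subgroup H := T.comap (MonoidHom.inr H H) with hB
  have hAnorm : A.Normal := by
    constructor
    intro a ha g
    obtain ⟨t, ht, ht1⟩ := h1 g
    have : t * ((a, 1) : H × H) * t⁻¹ ∈ T := mul_mem (mul_mem ht ha) (inv_mem ht)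
    have he : t * ((a, 1) : H × H) * t⁻¹ = (g * a * g⁻¹, 1) := by
      rw [← ht1]; ext <;> simp
    rw [he] at this
    exact this
  have hBnorm : B.Normal := by
    constructor
    intro b hb g
    obtain ⟨t, ht, ht2⟩ := h2 g
    have : t * ((1, b) : H × H) * t⁻¹ ∈ T := mul_mem (mul_mem ht hb) (inv_mem ht)
    have he : t * ((1, b) : H × H) * t⁻¹ = (1, g * b * g⁻¹) := by
      rw [← ht2]; ext <;> simp
    rw [he] at this
    exact this
  rcases hAnorm.eq_bot_or_eq_top with hAb | hAt
  · rcases hBnorm.eq_bot_or_eq_top with hBb | hBt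
    · -- graph case
      right
      have huniq : ∀ t ∈ T, ∀ t' ∈ T, (t : H × H).1 = (t' : H × H).1 → t.2 = t'.2 := by
        intro t ht t' ht' h11
        have hm : t⁻¹ * t' ∈ T := mul_mem (inv_mem ht) ht'
        have he : t⁻¹ * t' = ((1 : H), t.2⁻¹ * t'.2) := by
          ext
          · simp [h11]
          · simp
        rw [he] at hm
        have : t.2⁻¹ * t'.2 ∈ B := hm
        rw [hBb, Subgroup.mem_bot] at this
        exact (inv_mul_eq_one.mp this)
      have hsel : ∀ a : H, ∃ t, t ∈ T ∧ (t : H × H).1 = a := by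
        intro a; obtain ⟨t, ht, h⟩ := h1 a; exact ⟨t, ht, h⟩
      set g : H → H := fun a => ((hsel a).choose).2 with hg
      have hgmem : ∀ a, ((a, g a) : H × H) ∈ T := by
        intro a
        have h := (hsel a).choose_spec
        have : ((hsel a).choose : H × H) = (a, g a) := by
          ext
          · exact h.2
          · rfl
        rw [← this]; exact h.1
      have hgval : ∀ t ∈ T, g (t : H × H).1 = t.2 :=
        fun t ht => huniq (((t : H × H).1, g t.1)) (hgmem t.1) t ht rfl
      have hmul : ∀ a b, g (a * b) = g a * g b := by
        intro a b
        have : ((a * b, g a * g b) : H × H) ∈ T := by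
          have := mul_mem (hgmem a) (hgmem b)
          exact this
        exact (hgval _ this)
      have hinj : Function.Injective g := by
        intro a a' haa
        have hm : ((a, g a) : H × H) * (a', g a')⁻¹ ∈ T :=
          mul_mem (hgmem a) (inv_mem (hgmem a'))
        have he : ((a, g a) : H × H) * (a', g a')⁻¹ = (a * a'⁻¹, 1) := by
          ext
          · simp
          · simp [haa]
        rw [he] at hm
        have : a * a'⁻¹ ∈ A := hm
        rw [hAb, Subgroup.mem_bot] at this
        exact mul_inv_eq_one.mp this
      have hsurj : Function.Surjective g := by
        intro b
        obtain ⟨t, ht, ht2⟩ := h2 b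
        exact ⟨t.1, by rw [hgval t ht, ht2]⟩
      exact ⟨MulEquiv.ofBijective (MonoidHom.mk' g hmul) ⟨hinj, hsurj⟩, hgval⟩
    · -- B = ⊤ : T = everything
      left
      intro p
      obtain ⟨t, ht, ht1⟩ := h1 p.1
      have hb : ((1 : H), t.2⁻¹ * p.2) ∈ T := by
        have : t.2⁻¹ * p.2 ∈ B := hBt ▸ Subgroup.mem_top _
        exact this
      have : t * ((1 : H), t.2⁻¹ * p.2) ∈ T := mul_mem ht hb
      have he : t * ((1 : H), t.2⁻¹ * p.2) = p := by
        ext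
        · simp [ht1]
        · simp
      rw [he] at this
      exact this
  · -- A = ⊤ : T = everything
    left
    intro p
    obtain ⟨t, ht, ht2⟩ := h2 p.2
    have ha : ((t.1⁻¹ * p.1 : H), (1 : H)) ∈ T := by
      have : t.1⁻¹ * p.1 ∈ A := hAt ▸ Subgroup.mem_top _
      exact this
    have : t * ((t.1⁻¹ * p.1 : H), (1 : H)) ∈ T := mul_mem ht ha
    have he : t * ((t.1⁻¹ * p.1 : H), (1 : H)) = p := by
      ext
      · simp
      · simp [ht2]
    rw [he] at this
    exact this






/-- A subgroup of `H^k` surjecting onto all coordinates and all pairs of coordinates is full. -/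
lemma pi_subgroup_eq_top [IsSimpleGroup H] (hc : Subgroup.center H = ⊥) :
    ∀ (k : ℕ) (S : Subgroup (Fin k → H)),
      (∀ (i : Fin k) (h : H), ∃ s ∈ S, s i = h) →
      (∀ (i j : Fin k), i ≠ j → ∀ a b : H, ∃ s ∈ S, s i = a ∧ s j = b) →
      ∀ x, x ∈ S := by
  intro k
  induction k with
  | zero =>
    intro S _ _ x
    have : x = 1 := funext fun m => absurd m.2 (by omega)
    rw [this]; exact S.one_mem
  | succ k ih =>
    intro S hyp1 hyp2 x
    set r : (Fin (k + 1) → H) →* (Fin k → H) :=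
      MonoidHom.mk' (fun z => fun m => z m.castSucc) (fun a b => rfl) with hr
    have htop : ∀ y : Fin k → H, ∃ s ∈ S, r s = y := by
      intro y
      have hy : y ∈ S.map r := by
        refine ih (S.map r) ?_ ?_ y
        · intro m h
          obtain ⟨s, hs, hsm⟩ := hyp1 m.castSucc h
          exact ⟨r s, ⟨s, hs, rfl⟩, hsm⟩
        · intro i j hij a b
          obtain ⟨s, hs, hsi, hsj⟩ := hyp2 i.castSucc j.castSucc
            (fun h => hij (Fin.castSucc_injective _ h)) a b
          exact ⟨r s, ⟨s, hs, rfl⟩, hsi, hsj⟩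
      obtain ⟨s, hs, hrs⟩ := hy
      exact ⟨s, hs, hrs⟩
    set B : Subgroup H :=
      { carrier := {h | Pi.mulSingle (Fin.last k) h ∈ S}
        one_mem' := by simp only [Set.mem_setOf_eq, Pi.mulSingle_one]; exact S.one_mem
        mul_mem' := by
          intro a b ha hb
          simp only [Set.mem_setOf_eq, Pi.mulSingle_mul]
          exact S.mul_mem ha hb
        inv_mem' := by
          intro a ha
          simp only [Set.mem_setOf_eq, Pi.mulSingle_inv]
          exact S.inv_mem ha } with hBdef
    have hBnorm : B.Normal := by
      constructor
      intro h hh g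
      obtain ⟨s, hs, hsl⟩ := hyp1 (Fin.last k) g
      have he : s * Pi.mulSingle (Fin.last k) h * s⁻¹ =
          Pi.mulSingle (Fin.last k) (g * h * g⁻¹) := by
        ext m
        by_cases hm : m = Fin.last k
        · subst hm; simp [hsl]
        · simp [Pi.mulSingle_eq_of_ne hm]
      have : s * Pi.mulSingle (Fin.last k) h * s⁻¹ ∈ S :=
        S.mul_mem (S.mul_mem hs hh) (S.inv_mem hs)
      rw [he] at this
      exact this
    rcases hBnorm.eq_bot_or_eq_top with hBb | hBt
    · -- graph case: contradiction
      exfalso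
      have huniq : ∀ s ∈ S, ∀ s' ∈ S, r s = r s' → s (Fin.last k) = s' (Fin.last k) := by
        intro s hs s' hs' hrr
        have hz : s * s'⁻¹ ∈ S := S.mul_mem hs (S.inv_mem hs')
        have he : s * s'⁻¹ = Pi.mulSingle (Fin.last k) ((s * s'⁻¹) (Fin.last k)) := by
          ext m
          refine Fin.lastCases ?_ ?_ m
          · simp
          · intro p
            have : s p.castSucc = s' p.castSucc := congrFun hrr p
            simp [Pi.mulSingle_eq_of_ne (Fin.castSucc_lt_last p).ne, this]
        rw [he] at hz
        have : (s * s'⁻¹) (Fin.last k) ∈ B := hz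
        rw [hBb, Subgroup.mem_bot] at this
        have : s (Fin.last k) * (s' (Fin.last k))⁻¹ = 1 := this
        exact mul_inv_eq_one.mp this
      have hsel : ∀ y : Fin k → H, ∃ s, s ∈ S ∧ r s = y := fun y => by
        obtain ⟨s, hs, h⟩ := htop y; exact ⟨s, hs, h⟩
      set g0 : (Fin k → H) → H := fun y => (hsel y).choose (Fin.last k) with hg0
      have hkey : ∀ s ∈ S, g0 (r s) = s (Fin.last k) := by
        intro s hs
        exact huniq _ (hsel (r s)).choose_spec.1 s hs (hsel (r s)).choose_spec.2
      have hmul : ∀ y₁ y₂, g0 (y₁ * y₂) = g0 y₁ * g0 y₂ := by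
        intro y₁ y₂
        obtain ⟨s₁, hs₁, hr₁⟩ := hsel y₁
        obtain ⟨s₂, hs₂, hr₂⟩ := hsel y₂
        have h12 : g0 (r (s₁ * s₂)) = (s₁ * s₂) (Fin.last k) := hkey _ (S.mul_mem hs₁ hs₂)
        rw [map_mul, hr₁, hr₂] at h12
        rw [h12]
        have e1 : g0 y₁ = s₁ (Fin.last k) := by rw [← hr₁]; exact hkey _ hs₁
        have e2 : g0 y₂ = s₂ (Fin.last k) := by rw [← hr₂]; exact hkey _ hs₂
        rw [e1, e2]; rfl
      set f : (Fin k → H) →* H := MonoidHom.mk' g0 hmul with hf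
      have hfsurj : Function.Surjective f := by
        intro h
        obtain ⟨s, hs, hsl⟩ := hyp1 (Fin.last k) h
        exact ⟨r s, by rw [← hsl]; exact hkey s hs⟩
      obtain ⟨i, φ, hφ⟩ := hom_factor hc f hfsurj
      have hlast : ∀ s ∈ S, s (Fin.last k) = φ (s i.castSucc) := by
        intro s hs
        have : f (r s) = φ ((r s) i) := hφ (r s)
        rw [show f (r s) = g0 (r s) from rfl, hkey s hs] at this
        exact this
      obtain ⟨c, hc1⟩ := exists_ne (1 : H)
      obtain ⟨s, hs, hsi, hsl⟩ := hyp2 i.castSucc (Fin.last k) (Fin.castSucc_lt_last i).ne 1 c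
      rw [hlast s hs, hsi, map_one] at hsl
      exact hc1 hsl.symm
    · -- B = ⊤
      obtain ⟨s, hs, hrs⟩ := htop (r x)
      have hm : Pi.mulSingle (Fin.last k) (x (Fin.last k) * (s (Fin.last k))⁻¹) ∈ S := by
        have : x (Fin.last k) * (s (Fin.last k))⁻¹ ∈ B := hBt ▸ Subgroup.mem_top _
        exact this
      have he : x = Pi.mulSingle (Fin.last k) (x (Fin.last k) * (s (Fin.last k))⁻¹) * s := by
        ext m
        refine Fin.lastCases ?_ ?_ m
        · simp
        · intro p
          have : s p.castSucc = x p.castSucc := congrFun hrs p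
          simp [Pi.mulSingle_eq_of_ne (Fin.castSucc_lt_last p).ne, this]
      rw [he]
      exact S.mul_mem hm hs





instance mulAutFinite [Finite H] : Finite (MulAut H) :=
  Finite.of_injective (fun α => (α : H → H))
    (fun a b h => by ext x; exact congrFun h x)

/-- The automorphism-equivalence setoid on generating pairs. -/
def GenPairSetoid (H : Type*) [Group H] :
    Setoid {p : H × H // Subgroup.closure {p.1, p.2} = ⊤} where
  r p q := ∃ α : MulAut H, α p.1.1 = q.1.1 ∧ α p.1.2 = q.1.2
  iseqv := by
    refine ⟨fun p => ⟨1, rfl, rfl⟩, ?_, ?_⟩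
    · rintro p q ⟨α, h1, h2⟩
      exact ⟨α⁻¹, by rw [← h1]; exact α.symm_apply_apply _,
        by rw [← h2]; exact α.symm_apply_apply _⟩
    · rintro p q t ⟨α, h1, h2⟩ ⟨β, h3, h4⟩
      exact ⟨β * α, by rw [MulAut.mul_apply, h1, h3], by rw [MulAut.mul_apply, h2, h4]⟩

/-- Action of an automorphism on a generating pair. -/
def genPairAct (α : MulAut H) (p : {p : H × H // Subgroup.closure {p.1, p.2} = ⊤}) :
    {p : H × H // Subgroup.closure {p.1, p.2} = ⊤} :=
  ⟨(α p.1.1, α p.1.2), by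
    have hm := MonoidHom.map_closure α.toMonoidHom {p.1.1, p.1.2}
    rw [p.2, Set.image_pair] at hm
    simp only [MulEquiv.coe_toMonoidHom] at hm
    show Subgroup.closure {α p.1.1, α p.1.2} = ⊤
    rw [← hm, ← MonoidHom.range_eq_map]
    exact MonoidHom.range_eq_top_of_surjective _ α.surjective⟩

lemma phi2_eq_aux [Finite H] :
    phi2 H = Nat.card (Quotient (GenPairSetoid H)) * Nat.card (MulAut H) := by
  classical
  set P := {p : H × H // Subgroup.closure {p.1, p.2} = ⊤}
  letI : Fintype P := Fintype.ofFinite P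
  letI : Fintype (Quotient (GenPairSetoid H)) := Fintype.ofFinite _
  letI : Fintype (MulAut H) := Fintype.ofFinite _
  have hfiber : ∀ q : Quotient (GenPairSetoid H),
      Nat.card {p : P // Quotient.mk (GenPairSetoid H) p = q} = Nat.card (MulAut H) := by
    intro q
    have hmem : ∀ α : MulAut H, Quotient.mk (GenPairSetoid H) (genPairAct α q.out) = q := by
      intro α
      refine (Quotient.sound ?_).trans q.out_eq
      exact (GenPairSetoid H).symm ⟨α, rfl, rfl⟩
    refine (Nat.card_eq_of_bijective
      (fun α : MulAut H => ⟨genPairAct α q.out, hmem α⟩) ⟨?_, ?_⟩).symm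
    · intro α β hab
      have h1 : α q.out.1.1 = β q.out.1.1 := congrArg (fun p => p.1.1.1) hab
      have h2 : α q.out.1.2 = β q.out.1.2 := congrArg (fun p => p.1.1.2) hab
      have := MonoidHom.eq_of_eqOn_dense q.out.2
        (f := α.toMonoidHom) (g := β.toMonoidHom) ?_
      · ext x
        exact congrArg (fun f => f.toFun x) this
      · intro z hz
        rcases hz with hz | hz
        · rw [hz]; exact h1
        · rw [Set.mem_singleton_iff.mp hz]; exact h2
    · rintro ⟨p, hp⟩
      have hrel : (GenPairSetoid H).r q.out p := Quotient.exact (q.out_eq.trans hp.symm)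
      obtain ⟨α, h1, h2⟩ := hrel
      refine ⟨α, Subtype.ext (Subtype.ext ?_)⟩
      show ((α q.out.1.1, α q.out.1.2) : H × H) = p.1
      rw [h1, h2]
  have := Fintype.card_congr (Equiv.sigmaFiberEquiv (Quotient.mk (GenPairSetoid H) : P → _)).symm
  rw [Fintype.card_sigma] at this
  have hsum : ∀ q, Fintype.card {p : P // Quotient.mk (GenPairSetoid H) p = q} =
      Nat.card (MulAut H) := fun q => by
    rw [← Nat.card_eq_fintype_card]; exact hfiber q
  rw [Finset.sum_congr rfl (fun q _ => hsum q), Finset.sum_const, Finset.card_univ, smul_eq_mul]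
    at this
  show Nat.card P = _
  rw [Nat.card_eq_fintype_card, Nat.card_eq_fintype_card, this]

end WiegoldAux

/-- For a non-abelian finite simple group `H` and `k ≥ 1`, `Hᵏ` is 2-generated iff
`k·|Aut H| ≤ φ₂(H)`. -/

theorem two_generated_power_iff (H : Type*) [Group H] [Finite H] [IsSimpleGroup H]
    (hna : ¬ ∀ a b : H, a * b = b * a) (k : ℕ) (hk : 1 ≤ k) :
    (∃ x y : Fin k → H, Subgroup.closure {x, y} = ⊤) ↔
      k * Nat.card (MulAut H) ≤ phi2 H := by
  classical
  have hc : Subgroup.center H = ⊥ := center_eq_bot_of_simple hna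
  rw [phi2_eq_aux]
  have hevs : ∀ i : Fin k, Function.Surjective (Pi.evalMonoidHom (fun _ : Fin k => H) i) :=
    fun i h => ⟨fun _ => h, rfl⟩
  constructor
  · rintro ⟨x, y, hxy⟩
    have hgen : ∀ i, Subgroup.closure {x i, y i} = ⊤ := by
      intro i
      have hm := MonoidHom.map_closure (Pi.evalMonoidHom (fun _ : Fin k => H) i) {x, y}
      rw [hxy, Set.image_pair] at hm
      have : Subgroup.closure {Pi.evalMonoidHom (fun _ : Fin k => H) i x,
          Pi.evalMonoidHom (fun _ : Fin k => H) i y} = ⊤ := by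
        rw [← hm, ← MonoidHom.range_eq_map]
        exact MonoidHom.range_eq_top_of_surjective _ (hevs i)
      exact this
    set p : Fin k → {p : H × H // Subgroup.closure {p.1, p.2} = ⊤} :=
      fun i => ⟨(x i, y i), hgen i⟩ with hp
    have hinj : Function.Injective (fun i => Quotient.mk (GenPairSetoid H) (p i)) := by
      intro i j hij
      by_contra hne
      obtain ⟨α, h1, h2⟩ := Quotient.exact hij
      set D : Subgroup (Fin k → H) :=
        { carrier := {z | α (z i) = z j}
          one_mem' := by simp
          mul_mem' := by
            intro a b ha hb
            show α ((a * b) i) = (a * b) j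
            rw [Pi.mul_apply, map_mul, ha, hb, Pi.mul_apply]
          inv_mem' := by
            intro a ha
            show α (a⁻¹ i) = a⁻¹ j
            rw [Pi.inv_apply, map_inv, ha, Pi.inv_apply] } with hD
      have hDall : ∀ z : Fin k → H, α (z i) = z j := by
        intro z
        have hsub : ({x, y} : Set (Fin k → H)) ⊆ D := by
          rintro z (rfl | hz)
          · exact h1
          · rw [Set.mem_singleton_iff.mp hz]; exact h2
        have := (Subgroup.closure_le D).mpr hsub
        rw [hxy] at this
        exact this (Subgroup.mem_top z)
      obtain ⟨c, hc1⟩ := exists_ne (1 : H)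
      have hz := hDall (Pi.mulSingle i c)
      rw [Pi.mulSingle_eq_same, Pi.mulSingle_eq_of_ne (fun h => hne h.symm)] at hz
      exact hc1 (α.injective (by rw [hz, map_one]))
    have hk2 : k ≤ Nat.card (Quotient (GenPairSetoid H)) := by
      have := Nat.card_le_card_of_injective _ hinj
      simpa using this
    exact Nat.mul_le_mul_right _ hk2
  · intro hle
    have hautpos : 0 < Nat.card (MulAut H) := Nat.card_pos
    have hk2 : k ≤ Nat.card (Quotient (GenPairSetoid H)) :=
      Nat.le_of_mul_le_mul_right hle hautpos
    letI : Fintype (Quotient (GenPairSetoid H)) := Fintype.ofFinite _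
    have hcard : Fintype.card (Fin k) ≤ Fintype.card (Quotient (GenPairSetoid H)) := by
      rw [Fintype.card_fin, ← Nat.card_eq_fintype_card]
      exact hk2
    obtain ⟨e⟩ := Function.Embedding.nonempty_of_card_le hcard
    set rep : Fin k → {p : H × H // Subgroup.closure {p.1, p.2} = ⊤} :=
      fun i => (e i).out with hrep
    set x : Fin k → H := fun i => (rep i).1.1 with hx
    set y : Fin k → H := fun i => (rep i).1.2 with hy
    refine ⟨x, y, ?_⟩
    have hco : ∀ (i : Fin k) (h : H), ∃ s ∈ Subgroup.closure {x, y}, s i = h := by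
      intro i h
      have hm := MonoidHom.map_closure (Pi.evalMonoidHom (fun _ : Fin k => H) i) {x, y}
      rw [Set.image_pair] at hm
      have hm' : Subgroup.map (Pi.evalMonoidHom (fun _ : Fin k => H) i)
          (Subgroup.closure {x, y}) = ⊤ := by
        rw [hm]
        exact (rep i).2
      have : h ∈ Subgroup.map (Pi.evalMonoidHom (fun _ : Fin k => H) i)
          (Subgroup.closure {x, y}) := hm' ▸ Subgroup.mem_top h
      obtain ⟨s, hs, hsi⟩ := this
      exact ⟨s, hs, hsi⟩
    refine (Subgroup.eq_top_iff' _).mpr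
      (pi_subgroup_eq_top hc k (Subgroup.closure {x, y}) hco ?_)
    intro i j hij a b
    set pr : (Fin k → H) →* H × H :=
      (Pi.evalMonoidHom (fun _ : Fin k => H) i).prod (Pi.evalMonoidHom (fun _ : Fin k => H) j)
      with hpr
    set T := (Subgroup.closure {x, y}).map pr with hT
    have h1 : ∀ a : H, ∃ t ∈ T, t.1 = a := by
      intro a
      obtain ⟨s, hs, hsi⟩ := hco i a
      exact ⟨pr s, Subgroup.mem_map_of_mem pr hs, hsi⟩
    have h2 : ∀ b : H, ∃ t ∈ T, t.2 = b := by
      intro b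
      obtain ⟨s, hs, hsj⟩ := hco j b
      exact ⟨pr s, Subgroup.mem_map_of_mem pr hs, hsj⟩
    rcases pair_subgroup_cases T h1 h2 with htop | ⟨φ, hφ⟩
    · have : ((a, b) : H × H) ∈ T := htop (a, b)
      obtain ⟨s, hs, hst⟩ := this
      exact ⟨s, hs, congrArg Prod.fst hst, congrArg Prod.snd hst⟩
    · exfalso
      have hxm : x ∈ Subgroup.closure {x, y} := Subgroup.subset_closure (Set.mem_insert _ _)
      have hym : y ∈ Subgroup.closure {x, y} :=
        Subgroup.subset_closure (Set.mem_insert_of_mem _ rfl)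
      have hφx : φ (x i) = x j := hφ (pr x) (Subgroup.mem_map_of_mem pr hxm)
      have hφy : φ (y i) = y j := hφ (pr y) (Subgroup.mem_map_of_mem pr hym)
      have heq : e i = e j := by
        rw [← (e i).out_eq, ← (e j).out_eq]
        exact Quotient.sound ⟨φ, hφx, hφy⟩
      exact hij (e.injective heq)
end

section
/- Let H be a finite group, k ≥ 1, G = Hᵏ, and p a prime. Let T₁ = (a₁,b₁,c₁) and T₂ = (a₂,b₂,c₂) be triples of elements of G. If S_p(d₁) ∩ S_p(d₂) = ∅ for every d₁ ∈ {a₁,b₁,c₁} and every d₂ ∈ {a₂,b₂,c₂}, then there is no element g ∈ G of order p lying in both Σ(T₁) and Σ(T₂). -/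
open scoped MatrixGroups

/-- The `p`-summit of `d ∈ Hᵏ`: the set of indices at which the `p`-adic valuation of the
order of the coordinate attains its maximum over all coordinates. -/
def pSummit {H : Type*} [Group H] {k : ℕ} (p : ℕ) (d : Fin k → H) : Set (Fin k) :=
  {j | ∀ j', (orderOf (d j')).factorization p ≤ (orderOf (d j)).factorization p}

/-- An element `h` of `H` is `p`-full if the highest power of `p` dividing the exponent of
`H` divides the order of `h`. -/
def PFull (H : Type*) [Group H] (p : ℕ) (h : H) : Prop :=
  p ^ (Monoid.exponent H).factorization p ∣ orderOf h

open scoped Classical in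
/-- `ν_p(T)`: the number of `p`-full entries of the triple `T`. -/
noncomputable def nuP {H : Type*} [Group H] (p : ℕ) (T : H × H × H) : ℕ :=
  (if PFull H p T.1 then 1 else 0) + (if PFull H p T.2.1 then 1 else 0) +
    (if PFull H p T.2.2 then 1 else 0)

/-- Two triples are `p`-distinguishing if `ν_p(T₁) ≠ ν_p(T₂)`. -/
def PDistinguishing {H : Type*} [Group H] (p : ℕ) (T₁ T₂ : H × H × H) : Prop :=
  nuP p T₁ ≠ nuP p T₂

/-- Two triples are strongly `p`-distinguishing if they are `p`-distinguishing and whenever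
`ν_p(T_i) = 0` then either `p²` does not divide the exponent of `H` or `p` divides none of
the orders of the entries of `T_i`. -/
def StronglyPDistinguishing {H : Type*} [Group H] (p : ℕ) (T₁ T₂ : H × H × H) : Prop :=
  PDistinguishing p T₁ T₂ ∧
    ∀ T ∈ ({T₁, T₂} : Set (H × H × H)), nuP p T = 0 →
      ¬ (p ^ 2 ∣ Monoid.exponent H) ∨
        (¬ p ∣ orderOf T.1 ∧ ¬ p ∣ orderOf T.2.1 ∧ ¬ p ∣ orderOf T.2.2)

/-- The cyclic shift of a triple: `(x, y, z) ↦ (y, z, x)`. -/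
def cycShift {H : Type*} (T : H × H × H) : H × H × H := (T.2.1, T.2.2, T.1)

/-!
If a conjugate of an element `g` of order `p` is a power `d ^ n` of an entry `d` of a triple,
then in every coordinate `j` the `p`-adic valuation of the order of `d ^ n` is
`v_p(|d_j|) - v_p(n) ≤ 1`, with equality exactly where `g_j ≠ 1`. Hence the support of `g`
lies in the `p`-summit of `d`. A nonidentity `g` in `Σ(T₁) ∩ Σ(T₂)` would therefore put a
coordinate of its support into the `p`-summit of an entry of `T₁` and of an entry of `T₂`.
-/

/-- Truncated subtraction makes this hold also when `v_p(n) > v_p(orderOf x)` or `orderOf x = 0`. -/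
theorem factorization_orderOf_pow {M : Type*} [Monoid M] (x : M) {n : ℕ} (hn : n ≠ 0)
    (p : ℕ) :
    (orderOf (x ^ n)).factorization p = (orderOf x).factorization p - n.factorization p := by
  rw [orderOf_pow' x hn]
  rcases eq_or_ne (orderOf x) 0 with hx | hx
  · simp [hx]
  rw [Nat.factorization_div (Nat.gcd_dvd_left _ _), Nat.factorization_gcd hx hn]
  simp only [Finsupp.coe_tsub, Pi.sub_apply, Finsupp.inf_apply]
  omega

theorem mem_pSummit_of_mem_zpowers {H : Type*} [Group H] [Finite H] {k p : ℕ}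
    (hp : p.Prime) {d x : Fin k → H} (hx : x ∈ Subgroup.zpowers d) (hxp : x ^ p = 1)
    {j : Fin k} (hj : x j ≠ 1) : j ∈ pSummit p d := by
  obtain ⟨n, rfl⟩ := mem_powers_iff_mem_zpowers.2 hx
  beta_reduce at hxp hj
  have hn : n ≠ 0 := by rintro rfl; exact hj (by simp)
  have hdvd (i : Fin k) : orderOf (d i ^ n) ∣ p :=
    orderOf_dvd_of_pow_eq_one (congrFun hxp i)
  have hval_le (i : Fin k) :
      (orderOf (d i)).factorization p - n.factorization p ≤ 1 := by
    rw [← factorization_orderOf_pow _ hn]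
    rcases (Nat.dvd_prime hp).1 (hdvd i) with h | h <;> simp [h, hp.factorization_self]
  have hval_eq : (orderOf (d j)).factorization p - n.factorization p = 1 := by
    have hord : orderOf (d j ^ n) = p :=
      ((Nat.dvd_prime hp).1 (hdvd j)).resolve_left (mt orderOf_eq_one_iff.1 hj)
    rw [← factorization_orderOf_pow _ hn, hord, hp.factorization_self]
  intro i
  have := hval_le i
  omega

theorem exists_mem_pSummit_of_mem_sigmaSet {H : Type*} [Group H] [Finite H] {k p : ℕ}
    (hp : p.Prime) {T : (Fin k → H) × (Fin k → H) × (Fin k → H)} {g : Fin k → H}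
    (hg : g ∈ SigmaSet T) (hgp : g ^ p = 1) {j : Fin k} (hj : g j ≠ 1) :
    ∃ d ∈ ({T.1, T.2.1, T.2.2} : Set (Fin k → H)), j ∈ pSummit p d := by
  obtain ⟨u, hu⟩ := hg
  have hconj_p : (u * g * u⁻¹) ^ p = 1 := by rw [conj_pow, hgp, mul_one, mul_inv_cancel]
  have hconj_j : (u * g * u⁻¹) j ≠ 1 := by simpa using hj
  rcases hu with (h | h) | h
  · exact ⟨_, by simp, mem_pSummit_of_mem_zpowers hp h hconj_p hconj_j⟩
  · exact ⟨_, by simp, mem_pSummit_of_mem_zpowers hp h hconj_p hconj_j⟩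
  · exact ⟨_, by simp, mem_pSummit_of_mem_zpowers hp h hconj_p hconj_j⟩

theorem no_common_order_p_of_disjoint_summits_general (H : Type*) [Group H] [Finite H]
    (k : ℕ) (p : ℕ) (hp : p.Prime)
    (T₁ T₂ : (Fin k → H) × (Fin k → H) × (Fin k → H))
    (hdisj : ∀ d₁ ∈ ({T₁.1, T₁.2.1, T₁.2.2} : Set (Fin k → H)),
      ∀ d₂ ∈ ({T₂.1, T₂.2.1, T₂.2.2} : Set (Fin k → H)),
        pSummit p d₁ ∩ pSummit p d₂ = ∅) :
    ¬ ∃ g : Fin k → H, orderOf g = p ∧ g ∈ SigmaSet T₁ ∧ g ∈ SigmaSet T₂ := by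
  rintro ⟨g, hg, hg₁, hg₂⟩
  have hgp : g ^ p = 1 := hg ▸ pow_orderOf_eq_one g
  obtain ⟨j, hj⟩ : ∃ j, g j ≠ 1 := by
    by_contra! h
    rw [show g = 1 from funext h, orderOf_one] at hg
    exact hp.one_lt.ne hg
  obtain ⟨d₁, hd₁, hj₁⟩ := exists_mem_pSummit_of_mem_sigmaSet hp hg₁ hgp hj
  obtain ⟨d₂, hd₂, hj₂⟩ := exists_mem_pSummit_of_mem_sigmaSet hp hg₂ hgp hj
  exact (hdisj d₁ hd₁ d₂ hd₂).subset ⟨hj₁, hj₂⟩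

/-- Lemma 4.1: if all six pairwise intersections of `p`-summits of the entries of `T₁` and
`T₂` are empty, then no element of order `p` lies in both `Σ(T₁)` and `Σ(T₂)`. -/
theorem no_common_order_p_of_disjoint_summits (H : Type*) [Group H] [Finite H]
    (k : ℕ) (hk : 1 ≤ k) (p : ℕ) (hp : p.Prime)
    (T₁ T₂ : (Fin k → H) × (Fin k → H) × (Fin k → H))
    (hdisj : ∀ d₁ ∈ ({T₁.1, T₁.2.1, T₁.2.2} : Set (Fin k → H)),
      ∀ d₂ ∈ ({T₂.1, T₂.2.1, T₂.2.2} : Set (Fin k → H)),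
        pSummit p d₁ ∩ pSummit p d₂ = ∅) :
    ¬ ∃ g : Fin k → H, orderOf g = p ∧ g ∈ SigmaSet T₁ ∧ g ∈ SigmaSet T₂ :=
  no_common_order_p_of_disjoint_summits_general H k p hp T₁ T₂ hdisj
end

section
/- The alternating group A₅ on 5 letters does not admit an unmixed Beauville structure. -/
open scoped MatrixGroups

/-! Every element of `A₅` has order 1, 2, 3 or 5, and reciprocals of three numbers from
{1, 2, 3} sum to at least 1, so every hyperbolic triple of `A₅` contains an element of order 5.
As `25 ∤ 60`, the subgroups of order 5 are the Sylow 5-subgroups, which are all conjugate.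
Hence every element of order 5 lies in `Σ(T)` for every hyperbolic triple `T`. -/

section

variable {G : Type*} [Group G]

lemma IsHyperbolic.exists_four_le_orderOf [Finite G] {T : G × G × G} (hT : IsHyperbolic T) :
    ∃ t ∈ ({T.1, T.2.1, T.2.2} : Set G), 4 ≤ orderOf t := by
  by_contra! h
  have bound : ∀ t ∈ ({T.1, T.2.1, T.2.2} : Set G), (1 / 3 : ℚ) ≤ (orderOf t : ℚ)⁻¹ := by
    intro t ht
    have hpos : (0 : ℚ) < orderOf t := by exact_mod_cast orderOf_pos t
    have hle : (orderOf t : ℚ) ≤ 3 := by exact_mod_cast Nat.le_of_lt_succ (h t ht)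
    rw [one_div]
    exact inv_anti₀ hpos hle
  have := bound T.1 (by simp)
  have := bound T.2.1 (by simp)
  have := bound T.2.2 (by simp)
  unfold IsHyperbolic at hT
  linarith

lemma exists_conj_mem_zpowers_of_orderOf_eq_prime [Finite G] {p : ℕ} [hp : Fact p.Prime]
    (hG : ¬ p ^ 2 ∣ Nat.card G) {x y : G} (hx : orderOf x = p) (hy : orderOf y = p) :
    ∃ g : G, g * x * g⁻¹ ∈ Subgroup.zpowers y := by
  have hfac : (Nat.card G).factorization p = 1 := by
    have hcard := (Nat.card_pos (α := G)).ne'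
    have hdvd : p ^ 1 ∣ Nat.card G := by rw [pow_one, ← hx]; exact orderOf_dvd_natCard x
    rw [hp.out.pow_dvd_iff_le_factorization hcard] at hdvd hG
    omega
  have hcard : ∀ z : G, orderOf z = p →
      Nat.card (Subgroup.zpowers z) = p ^ (Nat.card G).factorization p := fun z hz => by
    rw [Nat.card_zpowers, hz, hfac, pow_one]
  obtain ⟨g, hg⟩ := MulAction.exists_smul_eq G (Sylow.ofCard _ (hcard x hx))
    (Sylow.ofCard _ (hcard y hy))
  refine ⟨g, ?_⟩
  rw [← Sylow.coe_ofCard _ (hcard y hy), ← hg, Sylow.coe_subgroup_smul]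
  exact Subgroup.smul_mem_pointwise_smul _ _ _ (Subgroup.mem_zpowers x)

lemma mem_sigmaSet_of_conj_mem_zpowers {T : G × G × G} {t x : G}
    (ht : t ∈ ({T.1, T.2.1, T.2.2} : Set G)) {g : G} (hg : g * x * g⁻¹ ∈ Subgroup.zpowers t) :
    x ∈ SigmaSet T := by
  refine ⟨g, ?_⟩
  rcases ht with rfl | rfl | rfl
  exacts [Or.inl (Or.inl hg), Or.inl (Or.inr hg), Or.inr hg]

theorem not_hasBeauvilleStructure_of_exists_orderOf_eq_prime [Finite G] {p : ℕ} [Fact p.Prime]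
    (hG : ¬ p ^ 2 ∣ Nat.card G)
    (h : ∀ T : G × G × G, IsHyperbolic T → ∃ t ∈ ({T.1, T.2.1, T.2.2} : Set G), orderOf t = p) :
    ¬ HasBeauvilleStructure G := by
  rintro ⟨T₁, T₂, -, h₁, -, h₂, hdisj⟩
  obtain ⟨x, -, hxp⟩ := h T₁ h₁
  have mem : ∀ T, IsHyperbolic T → x ∈ SigmaSet T := fun T hT => by
    obtain ⟨t, ht, htp⟩ := h T hT
    obtain ⟨g, hg⟩ := exists_conj_mem_zpowers_of_orderOf_eq_prime hG hxp htp
    exact mem_sigmaSet_of_conj_mem_zpowers ht hg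
  have hx1 : x = 1 := Set.mem_singleton_iff.mp (hdisj ▸ ⟨mem T₁ h₁, mem T₂ h₂⟩)
  exact (Fact.out : p.Prime).one_lt.ne' (by rw [← hxp, hx1, orderOf_one])

end

instance Nat.fact_prime_five : Fact (Nat.Prime 5) := ⟨by norm_num⟩

set_option maxRecDepth 10000 in
lemma alternatingGroup_five_pow_eq_one (g : alternatingGroup (Fin 5)) :
    g ^ 2 = 1 ∨ g ^ 3 = 1 ∨ g ^ 5 = 1 := by
  revert g
  decide

lemma alternatingGroup_five_orderOf_eq_five {g : alternatingGroup (Fin 5)} (hg : 4 ≤ orderOf g) :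
    orderOf g = 5 := by
  rcases alternatingGroup_five_pow_eq_one g with h | h | h
  · have := Nat.le_of_dvd two_pos (orderOf_dvd_of_pow_eq_one h); omega
  · have := Nat.le_of_dvd three_pos (orderOf_dvd_of_pow_eq_one h); omega
  · refine orderOf_eq_prime h fun h1 => ?_
    rw [h1, orderOf_one] at hg
    omega

/-- The alternating group `A₅` does not admit an unmixed Beauville structure. -/
theorem not_beauville_alternating_five :
    ¬ HasBeauvilleStructure (alternatingGroup (Fin 5)) := by
  refine not_hasBeauvilleStructure_of_exists_orderOf_eq_prime (p := 5) ?_ fun T hT => ?_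
  · rw [nat_card_alternatingGroup, Nat.card_eq_fintype_card, Fintype.card_fin]
    decide
  · obtain ⟨t, ht, h4⟩ := hT.exists_four_le_orderOf
    exact ⟨t, ht, alternatingGroup_five_orderOf_eq_five h4⟩
end
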